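/- In the supercommutative algebra Λ modeling the coordinate ring of C² for a superconformal coordinate system, the defining ideals of the diagonal and the superdiagonal satisfy the containments (Ideal.span {z₁−z₂, ζ₁−ζ₂})² ≤ Ideal.span {z₁−z₂−ζ₁ζ₂} ≤ Ideal.span {z₁−z₂, ζ₁−ζ₂}; that is, I_Δ² ⊆ I_Δˢᶜ ⊆ I_Δ. -/

import Mathlib

set_option synthInstance.maxHeartbeats 1000000

open MvPolynomial

/-- `R = ℂ[z₁,z₂]`. -/
abbrev Rpoly : Type := MvPolynomial (Fin 2) ℂ

/-- `Λ = ExteriorAlgebra R (Fin 2 → R)`, the free supercommutative `R`-algebra on two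
odd generators `ζ₁, ζ₂`, modeling the coordinate ring of `C²` in a superconformal
coordinate system. -/
abbrev SCΛ : Type := ExteriorAlgebra Rpoly (Fin 2 → Rpoly)

/-- The even coordinates `z₁, z₂`. -/
noncomputable def zc (i : Fin 2) : SCΛ := algebraMap Rpoly SCΛ (X i)

/-- The odd coordinates `ζ₁, ζ₂`. -/
noncomputable def ζc (i : Fin 2) : SCΛ :=
  ExteriorAlgebra.ι Rpoly (Pi.single i (1 : Rpoly))

/-!
Write `u = z₁ - z₂`, `θ = ζ₁ - ζ₂` and `s = u - ζ₁ζ₂`. Since `u` is central and `θ` is odd, both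
generators `g` of `I_Δ` satisfy `g Λ ⊆ Λ g`, so `I_Δ²` is generated as a left ideal by the
products of generators. These lie in `Λ s`: `u² = (u + ζ₁ζ₂) s`, `uθ = θu = θs` and `θ² = 0`,
since `(ζ₁ζ₂)² = θζ₁ζ₂ = 0`. Conversely `s = u + ζ₁θ ∈ I_Δ`.
-/

theorem Ideal.span_smul_span_le_of_forall_mul_mem {A : Type*} [Ring A] {S : Set A} {J : Ideal A}
    (hS : ∀ g ∈ S, ∀ x, ∃ y, g * x = y * g) (hJ : ∀ g ∈ S, ∀ h ∈ S, g * h ∈ J) :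
    Ideal.span S • Ideal.span S ≤ J := by
  have gen_mul_mem : ∀ g ∈ S, ∀ b ∈ Ideal.span S, g * b ∈ J := by
    intro g hg b hb
    induction hb using Submodule.span_induction with
    | mem h hh => exact hJ g hg h hh
    | zero => rw [mul_zero]; exact J.zero_mem
    | add x y _ _ hx hy => rw [mul_add]; exact J.add_mem hx hy
    | smul r x _ hx =>
      obtain ⟨y, hy⟩ := hS g hg r
      rw [smul_eq_mul, ← mul_assoc, hy, mul_assoc]
      exact J.mul_mem_left y hx
  refine Submodule.smul_le.mpr fun a ha b hb => ?_
  induction ha using Submodule.span_induction with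
  | mem g hg => exact gen_mul_mem g hg b hb
  | zero => rw [zero_smul]; exact J.zero_mem
  | add x y _ _ hx hy => rw [add_smul]; exact J.add_mem hx hy
  | smul r x _ hx => rw [smul_assoc]; exact J.smul_mem r hx

namespace ExteriorAlgebra

variable {R M : Type*} [CommRing R] [AddCommGroup M] [Module R M]

theorem ι_mul_ι_eq_neg_swap (x y : M) : ι R x * ι R y = -(ι R y * ι R x) :=
  eq_neg_of_add_eq_zero_left (ι_add_mul_swap x y)

theorem ι_mul_eq_involute_mul (m : M) (x : ExteriorAlgebra R M) :
    ι R m * x = CliffordAlgebra.involute x * ι R m := by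
  induction x using ExteriorAlgebra.induction with
  | algebraMap r => rw [AlgHom.commutes, Algebra.commutes]
  | ι n => rw [CliffordAlgebra.involute_ι, neg_mul, ι_mul_ι_eq_neg_swap]
  | mul x y hx hy => rw [map_mul, ← mul_assoc, hx, mul_assoc, hy, mul_assoc]
  | add x y hx hy => rw [map_add, mul_add, add_mul, hx, hy]

variable (x y : M)

theorem ι_mul_ι_mul_self : ι R x * ι R y * (ι R x * ι R y) = 0 := by
  rw [mul_assoc, ← mul_assoc (ι R y), ι_mul_ι_eq_neg_swap y x]
  simp only [neg_mul, mul_neg, ← mul_assoc, ι_sq_zero, zero_mul, neg_zero]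

theorem ι_sub_ι_mul_ι_mul_ι : (ι R x - ι R y) * (ι R x * ι R y) = 0 := by
  rw [sub_mul, ← mul_assoc, ι_sq_zero, zero_mul, zero_sub, ← mul_assoc, ι_mul_ι_eq_neg_swap y x,
    neg_mul, mul_assoc, ι_sq_zero, mul_zero, neg_zero, neg_zero]

theorem ι_mul_ι_sub_ι : ι R x * (ι R x - ι R y) = -(ι R x * ι R y) := by
  rw [mul_sub, ι_sq_zero, zero_sub]

variable (c : R)

theorem span_algebraMap_sub_ι_mul_ι_le :
    Ideal.span {algebraMap R _ c - ι R x * ι R y} ≤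
      Ideal.span {algebraMap R _ c, ι R x - ι R y} := by
  rw [Ideal.span_singleton_le_iff_mem, ← neg_neg (ι R x * ι R y), ← ι_mul_ι_sub_ι,
    sub_neg_eq_add]
  exact add_mem (Ideal.subset_span (.inl rfl))
    (Ideal.mul_mem_left _ _ (Ideal.subset_span (.inr rfl)))

theorem algebraMap_mul_self_eq :
    algebraMap R (ExteriorAlgebra R M) c * algebraMap R _ c =
      (algebraMap R _ c + ι R x * ι R y) * (algebraMap R _ c - ι R x * ι R y) := by
  rw [add_mul, mul_sub, mul_sub, Algebra.commutes c (ι R x * ι R y), ι_mul_ι_mul_self]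
  abel

theorem algebraMap_mul_ι_sub_ι :
    algebraMap R (ExteriorAlgebra R M) c * (ι R x - ι R y) =
      (ι R x - ι R y) * (algebraMap R _ c - ι R x * ι R y) := by
  rw [mul_sub (ι R x - ι R y), ι_sub_ι_mul_ι_mul_ι, sub_zero, Algebra.commutes]

theorem span_smul_span_le_span_algebraMap_sub_ι_mul_ι :
    Ideal.span {algebraMap R _ c, ι R x - ι R y} •
        Ideal.span {algebraMap R _ c, ι R x - ι R y} ≤
      Ideal.span {algebraMap R (ExteriorAlgebra R M) c - ι R x * ι R y} := by
  have hs := Ideal.mem_span_singleton_self (algebraMap R (ExteriorAlgebra R M) c - ι R x * ι R y)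
  apply Ideal.span_smul_span_le_of_forall_mul_mem
  · rintro g (rfl | rfl) z
    · exact ⟨z, Algebra.commutes c z⟩
    · exact ⟨_, (map_sub (ι R) x y).symm ▸ ι_mul_eq_involute_mul (x - y) z⟩
  · rintro g (rfl | rfl) h (rfl | rfl)
    · exact algebraMap_mul_self_eq x y c ▸ Ideal.mul_mem_left _ _ hs
    · exact algebraMap_mul_ι_sub_ι x y c ▸ Ideal.mul_mem_left _ _ hs
    · rw [← Algebra.commutes, algebraMap_mul_ι_sub_ι]
      exact Ideal.mul_mem_left _ _ hs
    · rw [← map_sub, ι_sq_zero]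
      exact Ideal.zero_mem _

end ExteriorAlgebra

theorem diag_sq_le_superdiag_le_diag :
    (Ideal.span {zc 0 - zc 1, ζc 0 - ζc 1}) • (Ideal.span {zc 0 - zc 1, ζc 0 - ζc 1}) ≤
      Ideal.span {zc 0 - zc 1 - ζc 0 * ζc 1} ∧
    Ideal.span {zc 0 - zc 1 - ζc 0 * ζc 1} ≤ Ideal.span {zc 0 - zc 1, ζc 0 - ζc 1} := by
  rw [show zc 0 - zc 1 = algebraMap Rpoly SCΛ (X 0 - X 1) from (map_sub _ _ _).symm]
  exact ⟨ExteriorAlgebra.span_smul_span_le_span_algebraMap_sub_ι_mul_ι _ _ _,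
    ExteriorAlgebra.span_algebraMap_sub_ι_mul_ι_le _ _ _⟩
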